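/- Let f, h : [0,1] × ℝ₊² → ℝ₊ be Lipschitz with constants L₁, L₂ respectively and satisfy f(x,0,i) = h(x,0,i) = 0. Let V₂(s,i) = (s − 1 − ln s) + (i − 1 − ln i) on (0,∞)². Then there exist constants C₂, C₃ > 0 (one may take C₂ = L₁ + L₂ + 1 and C₃ = C₁ + 2C₂ ln C₂ + 2C₂ with C₁ = a₁ + b₁ + σ₁²/2 + b₂ + σ₂²/2) such that L V₂(s, i, π) ≤ C₂ V₂(s,i) + C₃ for all s, i > 0 and probability measures π on [0,1]. -/

import Mathlib

/-!
Vanishing at `s = 0` and the Lipschitz bound give `0 ≤ f, h ≤ L s`, so the two `π`-averages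
add up to `G ∈ [0, (L₁ + L₂) s]`. Expanding the generator, every term except the constants
and the cross term `i G / s ≤ (L₁ + L₂) i` is nonpositive. Finally the tangent-line bound
`c log i ≤ i - c + c log c` for the concave `c log`, with `c = L₁ + L₂ + 1`, absorbs
`(L₁ + L₂) i` into `c (i - 1 - log i) + c log c`.
-/

open MeasureTheory

lemma setIntegral_le_of_norm_le_const {α : Type*} [MeasurableSpace α] {μ : Measure α}
    [IsProbabilityMeasure μ] {s : Set α} {g : α → ℝ} {C : ℝ} (hC₀ : 0 ≤ C)
    (hC : ∀ x ∈ s, ‖g x‖ ≤ C) : ∫ x in s, g x ∂μ ≤ C :=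
  calc ∫ x in s, g x ∂μ ≤ ‖∫ x in s, g x ∂μ‖ := Real.le_norm_self _
    _ ≤ C * μ.real s := norm_setIntegral_le_of_norm_le_const (measure_lt_top μ s) hC
    _ ≤ C * 1 := by gcongr; exact measureReal_le_one
    _ = C := mul_one C

lemma abs_le_mul_of_lipschitz_of_eq_zero {g : ℝ → ℝ → ℝ → ℝ} {L : ℝ}
    (hLip : ∀ x₁ x₂ s₁ s₂ i₁ i₂ : ℝ,
      |g x₁ s₁ i₁ - g x₂ s₂ i₂| ≤ L * (|x₁ - x₂| + |s₁ - s₂| + |i₁ - i₂|))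
    (h0 : ∀ x i : ℝ, g x 0 i = 0) (x : ℝ) {s : ℝ} (hs : 0 ≤ s) (i : ℝ) :
    |g x s i| ≤ L * s := by
  simpa [h0, abs_of_nonneg hs] using hLip x x s 0 i i

lemma mul_log_le_sub_add_mul_log {c x : ℝ} (hc : 0 < c) (hx : 0 < x) :
    c * Real.log x ≤ x - c + c * Real.log c := by
  have h := mul_le_mul_of_nonneg_left (Real.log_le_sub_one_of_pos (div_pos hx hc)) hc.le
  rw [Real.log_div hx.ne' hc.ne', mul_sub, mul_sub, mul_div_cancel₀ x hc.ne'] at h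
  linarith

lemma generator_le_const_add_mul {a₁ b₁ b₂ σ₁ σ₂ M s i F H : ℝ}
    (ha₁ : 0 ≤ a₁) (hb₁ : 0 ≤ b₁) (hb₂ : 0 ≤ b₂) (hs : 0 < s) (hi : 0 < i)
    (hFH₀ : 0 ≤ F + H) (hFH : F + H ≤ M * s) :
    (1 - 1 / s) * (a₁ - b₁ * s - i * F - i * H) + σ₁ ^ 2 / 2
        + (1 - 1 / i) * (-b₂ * i + i * F + i * H) + σ₂ ^ 2 / 2
      ≤ a₁ + b₁ + b₂ + σ₁ ^ 2 / 2 + σ₂ ^ 2 / 2 + M * i := by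
  have hexpand : (1 - 1 / s) * (a₁ - b₁ * s - i * F - i * H) + σ₁ ^ 2 / 2
        + (1 - 1 / i) * (-b₂ * i + i * F + i * H) + σ₂ ^ 2 / 2
      = a₁ + b₁ + b₂ + σ₁ ^ 2 / 2 + σ₂ ^ 2 / 2 + i * ((F + H) / s)
        - (b₁ * s + a₁ / s + b₂ * i + (F + H)) := by
    field_simp
    ring
  have hcross : i * ((F + H) / s) ≤ M * i := by
    rw [mul_comm M]
    exact mul_le_mul_of_nonneg_left ((div_le_iff₀ hs).2 hFH) hi.le
  rw [hexpand]
  linarith [div_nonneg ha₁ hs.le, mul_nonneg hb₁ hs.le, mul_nonneg hb₂ hi.le]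

theorem generator_V2_linear_growth_general (a₁ b₁ b₂ σ₁ σ₂ L₁ L₂ : ℝ)
    (ha₁ : 0 < a₁) (hb₁ : 0 < b₁) (hb₂ : 0 < b₂)
    (f h : ℝ → ℝ → ℝ → ℝ)
    (hf0 : ∀ x i : ℝ, f x 0 i = 0) (hh0 : ∀ x i : ℝ, h x 0 i = 0)
    (hfnn : ∀ x s i : ℝ, 0 ≤ f x s i) (hhnn : ∀ x s i : ℝ, 0 ≤ h x s i)
    (hfLip : ∀ x₁ x₂ s₁ s₂ i₁ i₂ : ℝ,
      |f x₁ s₁ i₁ - f x₂ s₂ i₂| ≤ L₁ * (|x₁ - x₂| + |s₁ - s₂| + |i₁ - i₂|))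
    (hhLip : ∀ x₁ x₂ s₁ s₂ i₁ i₂ : ℝ,
      |h x₁ s₁ i₁ - h x₂ s₂ i₂| ≤ L₂ * (|x₁ - x₂| + |s₁ - s₂| + |i₁ - i₂|)) :
    ∃ C₂ C₃ : ℝ, 0 < C₂ ∧ 0 < C₃ ∧
      ∀ (s i : ℝ), 0 < s → 0 < i →
        ∀ π : Measure ℝ, IsProbabilityMeasure π →
          (1 - 1 / s) * (a₁ - b₁ * s - i * (∫ x in Set.Icc (0:ℝ) 1, f x s i ∂π)
              - i * (∫ x in Set.Icc (0:ℝ) 1, x * h x s i ∂π)) + σ₁ ^ 2 / 2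
            + (1 - 1 / i) * (-b₂ * i + i * (∫ x in Set.Icc (0:ℝ) 1, f x s i ∂π)
              + i * (∫ x in Set.Icc (0:ℝ) 1, x * h x s i ∂π)) + σ₂ ^ 2 / 2
          ≤ C₂ * ((s - 1 - Real.log s) + (i - 1 - Real.log i)) + C₃ := by
  have hfb := abs_le_mul_of_lipschitz_of_eq_zero hfLip hf0
  have hhb := abs_le_mul_of_lipschitz_of_eq_zero hhLip hh0
  have hL₁ : 0 ≤ L₁ := by simpa using (abs_nonneg _).trans (hfb 0 zero_le_one 0)
  have hL₂ : 0 ≤ L₂ := by simpa using (abs_nonneg _).trans (hhb 0 zero_le_one 0)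
  set c := L₁ + L₂ + 1
  have hc : 0 < c := by positivity
  refine ⟨c, a₁ + b₁ + b₂ + σ₁ ^ 2 / 2 + σ₂ ^ 2 / 2 + c * Real.log c, hc, ?_, ?_⟩
  · have : 0 ≤ Real.log c := Real.log_nonneg (by linarith)
    positivity
  intro s i hs hi π hπ
  have hF₀ : 0 ≤ ∫ x in Set.Icc (0:ℝ) 1, f x s i ∂π :=
    setIntegral_nonneg measurableSet_Icc fun x _ => hfnn x s i
  have hH₀ : 0 ≤ ∫ x in Set.Icc (0:ℝ) 1, x * h x s i ∂π :=
    setIntegral_nonneg measurableSet_Icc fun x hx => mul_nonneg hx.1 (hhnn x s i)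
  have hF : ∫ x in Set.Icc (0:ℝ) 1, f x s i ∂π ≤ L₁ * s :=
    setIntegral_le_of_norm_le_const (by positivity) fun x _ => hfb x hs.le i
  have hH : ∫ x in Set.Icc (0:ℝ) 1, x * h x s i ∂π ≤ L₂ * s := by
    refine setIntegral_le_of_norm_le_const (by positivity) fun x hx => ?_
    rw [Real.norm_eq_abs, abs_mul, abs_of_nonneg hx.1, ← one_mul (L₂ * s)]
    exact mul_le_mul hx.2 (hhb x hs.le i) (abs_nonneg _) zero_le_one
  have hV₁ : 0 ≤ s - 1 - Real.log s := by linarith [Real.log_le_sub_one_of_pos hs]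
  refine (generator_le_const_add_mul (M := L₁ + L₂) ha₁.le hb₁.le hb₂.le hs hi
    (add_nonneg hF₀ hH₀) (by linarith)).trans ?_
  linarith [mul_log_le_sub_add_mul_log hc hi, mul_nonneg hc.le hV₁]

/-- The generator applied to `V₂(s,i) = (s - 1 - ln s) + (i - 1 - ln i)` satisfies a
linear growth bound `L V₂ ≤ C₂ V₂ + C₃`. -/
theorem generator_V2_linear_growth (a₁ b₁ b₂ σ₁ σ₂ L₁ L₂ : ℝ)
    (ha₁ : 0 < a₁) (hb₁ : 0 < b₁) (hb₂ : 0 < b₂) (hσ₁ : 0 < σ₁) (hσ₂ : 0 < σ₂)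
    (f h : ℝ → ℝ → ℝ → ℝ)
    (hf0 : ∀ x i : ℝ, f x 0 i = 0) (hh0 : ∀ x i : ℝ, h x 0 i = 0)
    (hfnn : ∀ x s i : ℝ, 0 ≤ f x s i) (hhnn : ∀ x s i : ℝ, 0 ≤ h x s i)
    (hfLip : ∀ x₁ x₂ s₁ s₂ i₁ i₂ : ℝ,
      |f x₁ s₁ i₁ - f x₂ s₂ i₂| ≤ L₁ * (|x₁ - x₂| + |s₁ - s₂| + |i₁ - i₂|))
    (hhLip : ∀ x₁ x₂ s₁ s₂ i₁ i₂ : ℝ,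
      |h x₁ s₁ i₁ - h x₂ s₂ i₂| ≤ L₂ * (|x₁ - x₂| + |s₁ - s₂| + |i₁ - i₂|)) :
    ∃ C₂ C₃ : ℝ, 0 < C₂ ∧ 0 < C₃ ∧
      ∀ (s i : ℝ), 0 < s → 0 < i →
        ∀ π : Measure ℝ, IsProbabilityMeasure π →
          (1 - 1 / s) * (a₁ - b₁ * s - i * (∫ x in Set.Icc (0:ℝ) 1, f x s i ∂π)
              - i * (∫ x in Set.Icc (0:ℝ) 1, x * h x s i ∂π)) + σ₁ ^ 2 / 2
            + (1 - 1 / i) * (-b₂ * i + i * (∫ x in Set.Icc (0:ℝ) 1, f x s i ∂π)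
              + i * (∫ x in Set.Icc (0:ℝ) 1, x * h x s i ∂π)) + σ₂ ^ 2 / 2
          ≤ C₂ * ((s - 1 - Real.log s) + (i - 1 - Real.log i)) + C₃ :=
  generator_V2_linear_growth_general a₁ b₁ b₂ σ₁ σ₂ L₁ L₂ ha₁ hb₁ hb₂ f h hf0 hh0 hfnn hhnn hfLip
    hhLip
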